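/- For any data set (so the bound is data-free), the density π_n of the empirical prior Π_n on the sieve Θ_n = Δ(S) × [t, T]^S satisfies, for all θ = (ω, μ) ∈ Θ_n, π_n(θ) ≤ (c + S)^{c + S + 1/2} c^{-c} · Π_{s=1}^S δ T^δ μ_s^{-(δ+1)} 1(μ_s ≥ t); consequently, ∫_{Θ_n} sup_{data} π_n(θ) dθ ≤ (c + S)^{c + S + 1/2} c^{-c} (T/t)^{δ S}. -/

import Mathlib

open MeasureTheory Set

/-- The simplex `Δ(S)` of probability vectors in `ℝ^S`. -/
def simplexSet (S : ℕ) : Set (Fin S → ℝ) :=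
  {ω | (∀ s, 0 ≤ ω s) ∧ ∑ s, ω s = 1}

/-- Lebesgue measure on the simplex `Δ(S)` (via the first `S-1` coordinates). -/
noncomputable def simplexMeasure : (S : ℕ) → Measure (Fin S → ℝ)
  | 0 => 0
  | m + 1 =>
      Measure.map (fun y : Fin m → ℝ => Fin.snoc y (1 - ∑ i, y i))
        (volume.restrict {y : Fin m → ℝ | (∀ i, 0 ≤ y i) ∧ ∑ i, y i ≤ 1})

/-- The density of the Pareto distribution `Par(m, δ)`: `δ m^δ μ^{-(δ+1)}` on `[m, ∞)`. -/
noncomputable def paretoDens (m δ x : ℝ) : ℝ :=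
  if m ≤ x then δ * m ^ δ * x ^ (-(δ + 1)) else 0

/-- The sieve `Θ_n = Δ(S) × [t, T]^S`. -/
def sieve (S : ℕ) (t T : ℝ) : Set ((Fin S → ℝ) × (Fin S → ℝ)) :=
  {θ | θ.1 ∈ simplexSet S ∧ ∀ s, θ.2 s ∈ Set.Icc t T}

/-- Joint density of the empirical prior `Π_n` centered at `θ̂ = (ω̂, μ̂)`:
Dirichlet density `Γ(c+S)/Π Γ(1+c ω̂_s) · Π ω_s^{c ω̂_s}` times the product of
Pareto densities `δ μ̂_s^δ μ_s^{-(δ+1)} 1(μ_s ≥ μ̂_s)`. -/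
noncomputable def empPriorDens (S : ℕ) (c δ : ℝ) (θhat θ : (Fin S → ℝ) × (Fin S → ℝ)) : ℝ :=
  (Real.Gamma (c + S) / ∏ s, Real.Gamma (1 + c * θhat.1 s)) *
    (∏ s, θ.1 s ^ (c * θhat.1 s)) * ∏ s, paretoDens (θhat.2 s) δ (θ.2 s)

open Real
open scoped ENNReal

/-! By Gibbs' inequality the Dirichlet kernel `∏ ω_s ^ (c ω̂_s)` is largest at `ω = ω̂`.
The bounds `a ^ a ≤ e ^ a Γ(a + 1)` and `Γ(x) ≤ x ^ x e ^ (1 - x)` (for `x ≥ 1`), both read off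
Euler's integral, then bound the Dirichlet density, uniformly in `ω̂`, by
`Γ(c + S) e ^ c c ^ (-c) ≤ (c + S) ^ (c + S) c ^ (-c)`.
A Pareto density with scale in `[t, T]` is at most `(T / t) ^ δ` times the Pareto density with
scale `t`, which integrates to `1`; as the simplex has measure at most `1`, integrating this
envelope gives `(T / t) ^ (δ S)`. -/

namespace Real

theorem rpow_self_le_exp_mul_Gamma_add_one {a : ℝ} (ha : 0 ≤ a) :
    a ^ a ≤ exp a * Gamma (a + 1) := by
  have hint : IntegrableOn (fun x => exp (-x) * x ^ (a + 1 - 1)) (Ioi 0) :=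
    GammaIntegral_convergent (by linarith)
  have hlower : a ^ a * exp (-a) ≤ Gamma (a + 1) :=
    calc a ^ a * exp (-a) = ∫ x in Ioi a, a ^ a * exp (-x) := by
          rw [integral_const_mul, integral_exp_neg_Ioi]
      _ ≤ ∫ x in Ioi a, exp (-x) * x ^ (a + 1 - 1) := by
          refine setIntegral_mono_on ((integrableOn_exp_neg_Ioi a).const_mul _)
            (hint.mono_set (Ioi_subset_Ioi ha)) measurableSet_Ioi fun x hx => ?_
          rw [add_sub_cancel_right, mul_comm]
          gcongr
          exact (mem_Ioi.1 hx).le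
      _ ≤ ∫ x in Ioi 0, exp (-x) * x ^ (a + 1 - 1) :=
          setIntegral_mono_set hint
            ((ae_restrict_mem measurableSet_Ioi).mono fun x (hx : 0 < x) => by positivity)
            (Ioi_subset_Ioi ha).eventuallyLE
      _ = Gamma (a + 1) := (Gamma_eq_integral (by linarith)).symm
  calc a ^ a = exp a * (a ^ a * exp (-a)) := by
        rw [mul_left_comm, ← exp_add, add_neg_cancel, exp_zero, mul_one]
    _ ≤ exp a * Gamma (a + 1) := by gcongr

theorem Gamma_le_rpow_self_mul_exp {x : ℝ} (hx : 1 ≤ x) : Gamma x ≤ x ^ x * exp (1 - x) := by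
  have hx0 : 0 < x := by linarith
  have hpt : ∀ t ∈ Ioi (0 : ℝ),
      exp (-t) * t ^ (x - 1) ≤ x ^ (x - 1) * exp (1 - x) * exp (-x⁻¹ * t) := by
    intro t (ht : 0 < t)
    have hu : 0 < t / x := by positivity
    calc exp (-t) * t ^ (x - 1)
        = x ^ (x - 1) * (exp (-t) * exp (log (t / x) * (x - 1))) := by
          rw [← rpow_def_of_pos hu, div_rpow ht.le hx0.le]
          field_simp
      _ ≤ x ^ (x - 1) * (exp (-t) * exp ((t / x - 1) * (x - 1))) := by
          gcongr
          exact log_le_sub_one_of_pos hu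
      _ = x ^ (x - 1) * exp (1 - x) * exp (-x⁻¹ * t) := by
          rw [mul_assoc, ← exp_add, ← exp_add]
          congr 2
          field_simp
          ring
  calc Gamma x = ∫ t in Ioi 0, exp (-t) * t ^ (x - 1) := Gamma_eq_integral hx0
    _ ≤ ∫ t in Ioi 0, x ^ (x - 1) * exp (1 - x) * exp (-x⁻¹ * t) :=
        setIntegral_mono_on (GammaIntegral_convergent hx0)
          ((exp_neg_integrableOn_Ioi 0 (inv_pos.2 hx0)).const_mul _) measurableSet_Ioi hpt
    _ = x ^ x * exp (1 - x) := by
        rw [integral_const_mul, integral_exp_mul_Ioi (by simpa using hx0) 0, mul_zero, exp_zero,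
          rpow_sub_one hx0.ne']
        field_simp

end Real

section Simplex

variable {ι : Type*} [Fintype ι] {w ω : ι → ℝ}

theorem prod_rpow_le_prod_rpow_self (hw0 : ∀ i, 0 ≤ w i) (hw1 : ∑ i, w i = 1)
    (hω0 : ∀ i, 0 ≤ ω i) (hω1 : ∑ i, ω i ≤ 1) : ∏ i, ω i ^ w i ≤ ∏ i, w i ^ w i := by
  -- `ω i / w i` is the junk value `0` where `w i = 0`, harmless as it then carries weight `0`.
  have hsplit : ∀ i, ω i ^ w i = w i ^ w i * (ω i / w i) ^ w i := by
    intro i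
    by_cases h : w i = 0
    · simp [h]
    · rw [← mul_rpow (hw0 i) (div_nonneg (hω0 i) (hw0 i)), mul_div_cancel₀ _ h]
  have hmean : ∑ i, w i * (ω i / w i) ≤ 1 := by
    refine le_trans (Finset.sum_le_sum fun i _ => ?_) hω1
    by_cases h : w i = 0
    · simp [h, hω0 i]
    · rw [mul_div_cancel₀ _ h]
  calc ∏ i, ω i ^ w i = (∏ i, w i ^ w i) * ∏ i, (ω i / w i) ^ w i := by
        rw [← Finset.prod_mul_distrib]; exact Finset.prod_congr rfl fun i _ => hsplit i
    _ ≤ (∏ i, w i ^ w i) * 1 := by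
        gcongr
        · exact Finset.prod_nonneg fun i _ => rpow_nonneg (hw0 i) _
        · exact (geom_mean_le_arith_mean_weighted _ w _ (fun i _ => hw0 i) hw1
            fun i _ => div_nonneg (hω0 i) (hw0 i)).trans hmean
    _ = ∏ i, w i ^ w i := mul_one _

theorem prod_rpow_mul_le_exp_mul_prod_Gamma {c : ℝ} (hc : 0 < c) (hw0 : ∀ i, 0 ≤ w i)
    (hw1 : ∑ i, w i = 1) (hω0 : ∀ i, 0 ≤ ω i) (hω1 : ∑ i, ω i ≤ 1) :
    ∏ i, ω i ^ (c * w i) ≤ exp c * c ^ (-c) * ∏ i, Gamma (1 + c * w i) := by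
  have hpow : ∀ v : ι → ℝ, (∀ i, 0 ≤ v i) → ∏ i, v i ^ (c * w i) = (∏ i, v i ^ w i) ^ c :=
    fun v hv => by
      rw [← finsetProd_rpow _ _ fun i _ => rpow_nonneg (hv i) _]
      exact Finset.prod_congr rfl fun i _ => by rw [mul_comm, rpow_mul (hv i)]
  have hterm :
      ∀ i, w i ^ (c * w i) ≤ exp (c * w i) * c ^ (-(c * w i)) * Gamma (1 + c * w i) := by
    intro i
    have ha : 0 ≤ c * w i := mul_nonneg hc.le (hw0 i)
    calc w i ^ (c * w i) = (c * w i) ^ (c * w i) * c ^ (-(c * w i)) := by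
          rw [mul_rpow hc.le (hw0 i), rpow_neg hc.le]
          field_simp
      _ ≤ exp (c * w i) * Gamma (c * w i + 1) * c ^ (-(c * w i)) := by
          gcongr
          exact rpow_self_le_exp_mul_Gamma_add_one ha
      _ = exp (c * w i) * c ^ (-(c * w i)) * Gamma (1 + c * w i) := by
          rw [add_comm]; ring
  calc ∏ i, ω i ^ (c * w i) ≤ ∏ i, w i ^ (c * w i) := by
        rw [hpow ω hω0, hpow w hw0]
        exact rpow_le_rpow (Finset.prod_nonneg fun i _ => rpow_nonneg (hω0 i) _)
          (prod_rpow_le_prod_rpow_self hw0 hw1 hω0 hω1) hc.le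
    _ ≤ ∏ i, exp (c * w i) * c ^ (-(c * w i)) * Gamma (1 + c * w i) :=
        Finset.prod_le_prod (fun i _ => rpow_nonneg (hw0 i) _) fun i _ => hterm i
    _ = exp c * c ^ (-c) * ∏ i, Gamma (1 + c * w i) := by
        rw [Finset.prod_mul_distrib, Finset.prod_mul_distrib, ← exp_sum, ← rpow_sum_of_pos hc,
          ← Finset.mul_sum, Finset.sum_neg_distrib, ← Finset.mul_sum, hw1, mul_one]

theorem Gamma_div_prod_Gamma_mul_prod_rpow_le {c : ℝ} (hc : 0 < c) (hw0 : ∀ i, 0 ≤ w i)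
    (hw1 : ∑ i, w i = 1) (hω0 : ∀ i, 0 ≤ ω i) (hω1 : ∑ i, ω i ≤ 1) :
    Gamma (c + Fintype.card ι) / (∏ i, Gamma (1 + c * w i)) * ∏ i, ω i ^ (c * w i) ≤
      (c + Fintype.card ι) ^ (c + Fintype.card ι + 1 / 2) * c ^ (-c) := by
  set n : ℝ := (Fintype.card ι : ℝ)
  have hn : 1 ≤ n := by
    have := Finset.nonempty_of_sum_ne_zero (hw1.trans_ne one_ne_zero)
    exact Nat.one_le_cast.2 (Finset.card_pos.2 this)
  have hΓ : 0 < ∏ i, Gamma (1 + c * w i) :=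
    Finset.prod_pos fun i _ => Gamma_pos_of_pos (by nlinarith [hw0 i])
  calc Gamma (c + n) / (∏ i, Gamma (1 + c * w i)) * ∏ i, ω i ^ (c * w i)
      ≤ Gamma (c + n) / (∏ i, Gamma (1 + c * w i)) *
          (exp c * c ^ (-c) * ∏ i, Gamma (1 + c * w i)) := by
        gcongr
        exact prod_rpow_mul_le_exp_mul_prod_Gamma hc hw0 hw1 hω0 hω1
    _ = Gamma (c + n) * exp c * c ^ (-c) := by field_simp
    _ ≤ (c + n) ^ (c + n) * exp (1 - (c + n)) * exp c * c ^ (-c) := by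
        gcongr
        exact Gamma_le_rpow_self_mul_exp (by linarith)
    _ = (c + n) ^ (c + n) * exp (1 - (c + n) + c) * c ^ (-c) := by
        rw [exp_add]; ring
    _ = (c + n) ^ (c + n) * exp (1 - n) * c ^ (-c) := by ring_nf
    _ ≤ (c + n) ^ (c + n) * (c + n) ^ (1 / 2 : ℝ) * c ^ (-c) := by
        gcongr
        calc exp (1 - n) ≤ 1 := exp_le_one_iff.2 (by linarith)
          _ ≤ (c + n) ^ (1 / 2 : ℝ) := one_le_rpow (by linarith) (by norm_num)
    _ = (c + n) ^ (c + n + 1 / 2) * c ^ (-c) := by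
        rw [← rpow_add (by linarith)]

end Simplex

section Pareto

variable {m δ t T : ℝ}

theorem paretoDens_eq_indicator :
    paretoDens m δ = (Ici m).indicator fun x => δ * m ^ δ * x ^ (-(δ + 1)) := by
  ext x
  simp only [paretoDens, indicator, mem_Ici]

theorem measurable_paretoDens : Measurable (paretoDens m δ) := by
  rw [paretoDens_eq_indicator]
  exact (by fun_prop : Measurable fun x : ℝ => δ * m ^ δ * x ^ (-(δ + 1))).indicator
    measurableSet_Ici

theorem paretoDens_nonneg (hm : 0 ≤ m) (hδ : 0 ≤ δ) (x : ℝ) : 0 ≤ paretoDens m δ x := by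
  unfold paretoDens
  split_ifs with hx
  · have := hm.trans hx
    positivity
  · exact le_rfl

theorem integrable_paretoDens (hm : 0 < m) (hδ : 0 < δ) : Integrable (paretoDens m δ) := by
  rw [paretoDens_eq_indicator, integrable_indicator_iff measurableSet_Ici,
    integrableOn_Ici_iff_integrableOn_Ioi]
  exact (integrableOn_Ioi_rpow_of_lt (by linarith) hm).const_mul _

theorem integral_paretoDens (hm : 0 < m) (hδ : 0 < δ) : ∫ x, paretoDens m δ x = 1 := by
  rw [paretoDens_eq_indicator, integral_indicator measurableSet_Ici, integral_Ici_eq_integral_Ioi,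
    integral_const_mul, integral_Ioi_rpow_of_lt (by linarith) hm,
    show -(δ + 1) + 1 = -δ by ring, rpow_neg hm.le]
  field_simp

theorem paretoDens_le_rpow_div_mul_paretoDens (ht : 0 < t) (htm : t ≤ m) (hmT : m ≤ T)
    (hδ : 0 ≤ δ) (x : ℝ) : paretoDens m δ x ≤ (T / t) ^ δ * paretoDens t δ x := by
  have hT : 0 ≤ T := ht.le.trans (htm.trans hmT)
  have hscale : (T / t) ^ δ * t ^ δ = T ^ δ := by
    rw [div_rpow hT ht.le, div_mul_cancel₀ _ (rpow_pos_of_pos ht δ).ne']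
  unfold paretoDens
  split_ifs with hmx htx htx
  · have := ht.le.trans htx
    calc δ * m ^ δ * x ^ (-(δ + 1)) ≤ δ * T ^ δ * x ^ (-(δ + 1)) := by
          gcongr
          linarith
      _ = (T / t) ^ δ * (δ * t ^ δ * x ^ (-(δ + 1))) := by
          rw [← hscale]; ring
  · exact absurd (htm.trans hmx) htx
  · have := ht.le.trans htx
    positivity
  · simp

theorem rpow_div_mul_paretoDens (ht : 0 < t) (hT : 0 ≤ T) (x : ℝ) :
    (T / t) ^ δ * paretoDens t δ x = if t ≤ x then δ * T ^ δ * x ^ (-(δ + 1)) else 0 := by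
  unfold paretoDens
  split_ifs
  · rw [div_rpow hT ht.le]
    field_simp
  · exact mul_zero _

end Pareto

theorem simplexMeasure_univ_le_one (S : ℕ) : simplexMeasure S univ ≤ 1 := by
  cases S with
  | zero => simp [simplexMeasure]
  | succ m =>
    rw [simplexMeasure, Measure.map_apply (by fun_prop) MeasurableSet.univ, preimage_univ,
      Measure.restrict_apply_univ]
    calc volume {y : Fin m → ℝ | (∀ i, 0 ≤ y i) ∧ ∑ i, y i ≤ 1}
        ≤ volume (univ.pi fun _ : Fin m => Icc (0 : ℝ) 1) :=
          measure_mono fun y ⟨h0, h1⟩ i _ =>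
            ⟨h0 i, (Finset.single_le_sum (fun j _ => h0 j) (Finset.mem_univ i)).trans h1⟩
      _ = 1 := by simp [Real.volume_Icc_pi]

theorem setLIntegral_le_of_le_mul_prod {α E ι : Type*} [MeasurableSpace α] [MeasurableSpace E]
    [Fintype ι] {μ : Measure α} {ν : Measure E} [SigmaFinite ν] (hμ : μ univ ≤ 1) {g : E → ℝ}
    (hg : Measurable g) (hgi : Integrable g ν) (hg0 : ∀ x, 0 ≤ g x) {K : ℝ} (hK : 0 ≤ K)
    {A : Set (α × (ι → E))} {F : α × (ι → E) → ℝ≥0∞}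
    (hF : ∀ θ ∈ A, F θ ≤ ENNReal.ofReal (K * ∏ i, g (θ.2 i))) :
    ∫⁻ θ in A, F θ ∂(μ.prod (Measure.pi fun _ => ν)) ≤
      ENNReal.ofReal (K * (∫ x, g x ∂ν) ^ Fintype.card ι) := by
  have hprod : Measurable fun x : ι → E => ENNReal.ofReal (∏ i, g (x i)) := by fun_prop
  calc ∫⁻ θ in A, F θ ∂(μ.prod (Measure.pi fun _ => ν))
      ≤ ∫⁻ θ in A, ENNReal.ofReal K * ENNReal.ofReal (∏ i, g (θ.2 i))
          ∂(μ.prod (Measure.pi fun _ => ν)) :=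
        setLIntegral_mono (by fun_prop) fun θ hθ => (hF θ hθ).trans_eq (ENNReal.ofReal_mul hK)
    _ ≤ ∫⁻ θ, ENNReal.ofReal K * ENNReal.ofReal (∏ i, g (θ.2 i))
          ∂(μ.prod (Measure.pi fun _ => ν)) := setLIntegral_le_lintegral _ _
    _ = ENNReal.ofReal K * μ univ *
          ENNReal.ofReal (∫ x, ∏ i, g (x i) ∂(Measure.pi fun _ => ν)) := by
        rw [lintegral_prod_mul aemeasurable_const hprod.aemeasurable, lintegral_const,
          ofReal_integral_eq_lintegral_ofReal (Integrable.fintype_prod (ι := ι) fun _ => hgi)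
            (ae_of_all _ fun x => Finset.prod_nonneg fun i _ => hg0 (x i))]
    _ ≤ ENNReal.ofReal K * 1 * ENNReal.ofReal ((∫ x, g x ∂ν) ^ Fintype.card ι) := by
        rw [integral_fintype_prod_eq_pow (ι := ι) g]
        gcongr
    _ = ENNReal.ofReal (K * (∫ x, g x ∂ν) ^ Fintype.card ι) := by
        rw [mul_one, ENNReal.ofReal_mul hK]

theorem empPriorDens_le {S : ℕ} {c δ t T : ℝ} (hc : 0 < c) (hδ : 0 ≤ δ) (ht : 0 < t)
    {θhat θ : (Fin S → ℝ) × (Fin S → ℝ)} (hθhat : θhat ∈ sieve S t T)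
    (hθ : θ.1 ∈ simplexSet S) :
    empPriorDens S c δ θhat θ ≤
      (c + S) ^ (c + S + 1 / 2) * c ^ (-c) * ∏ s, (T / t) ^ δ * paretoDens t δ (θ.2 s) := by
  obtain ⟨⟨hw0, hw1⟩, hμ⟩ := hθhat
  have hdir := Gamma_div_prod_Gamma_mul_prod_rpow_le hc hw0 hw1 hθ.1 hθ.2.le
  rw [Fintype.card_fin] at hdir
  have hnn : ∀ s, 0 ≤ paretoDens (θhat.2 s) δ (θ.2 s) :=
    fun s => paretoDens_nonneg (ht.le.trans (hμ s).1) hδ _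
  exact mul_le_mul hdir
    (Finset.prod_le_prod (fun s _ => hnn s) fun s _ =>
      paretoDens_le_rpow_div_mul_paretoDens ht (hμ s).1 (hμ s).2 hδ _)
    (Finset.prod_nonneg fun s _ => hnn s) (by positivity)

theorem empirical_prior_density_global_bound_general
    (S : ℕ) (c δ t T : ℝ)
    (hc : 0 < c) (hδ : 0 < δ) (ht : 0 < t) (htT : t < T) :
    (∀ θhat ∈ sieve S t T, ∀ θ ∈ sieve S t T,
      empPriorDens S c δ θhat θ ≤
        (c + S) ^ (c + S + 1 / 2) * c ^ (-c) *
          ∏ s, (if t ≤ θ.2 s then δ * T ^ δ * θ.2 s ^ (-(δ + 1)) else 0)) ∧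
    (∫⁻ θ in sieve S t T,
        (⨆ θhat ∈ sieve S t T, ENNReal.ofReal (empPriorDens S c δ θhat θ))
        ∂((simplexMeasure S).prod (Measure.pi fun _ : Fin S => (volume : Measure ℝ))) ≤
      ENNReal.ofReal ((c + S) ^ (c + S + 1 / 2) * c ^ (-c) * (T / t) ^ (δ * S))) := by
  have hT : 0 ≤ T := ht.le.trans htT.le
  simp only [← rpow_div_mul_paretoDens ht hT]
  have hdens := fun θhat (hθhat : θhat ∈ sieve S t T) θ (hθ : θ ∈ sieve S t T) =>
    empPriorDens_le hc hδ.le ht hθhat hθ.1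
  refine ⟨hdens, ?_⟩
  calc _ ≤ ENNReal.ofReal ((c + S) ^ (c + S + 1 / 2) * c ^ (-c) *
          (∫ x, (T / t) ^ δ * paretoDens t δ x) ^ S) := by
        simpa using setLIntegral_le_of_le_mul_prod (simplexMeasure_univ_le_one S)
          (measurable_paretoDens.const_mul _) ((integrable_paretoDens ht hδ).const_mul _)
          (fun x => mul_nonneg (by positivity) (paretoDens_nonneg ht.le hδ.le x)) (by positivity)
          fun θ hθ => iSup₂_le fun θhat hθhat =>
            ENNReal.ofReal_le_ofReal (hdens θhat hθhat θ hθ)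
    _ = _ := by
        rw [integral_const_mul, integral_paretoDens ht hδ, mul_one,
          rpow_mul_natCast (div_nonneg hT ht.le)]

/-- **Data-free bound on the empirical prior density.**  For any center `θ̂ ∈ Θ_n` (so the
bound is data-free) and any `θ = (ω, μ) ∈ Θ_n`,
`π_n(θ) ≤ (c + S)^{c+S+1/2} c^{-c} Π_s δ T^δ μ_s^{-(δ+1)} 1(μ_s ≥ t)`; consequently,
`∫_{Θ_n} sup_{data} π_n(θ) dθ ≤ (c + S)^{c+S+1/2} c^{-c} (T/t)^{δS}`. -/
theorem empirical_prior_density_global_bound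
    (S : ℕ) (hS : 1 ≤ S) (c δ t T : ℝ)
    (hc : 0 < c) (hδ : 0 < δ) (ht : 0 < t) (htT : t < T) :
    (∀ θhat ∈ sieve S t T, ∀ θ ∈ sieve S t T,
      empPriorDens S c δ θhat θ ≤
        (c + S) ^ (c + S + 1 / 2) * c ^ (-c) *
          ∏ s, (if t ≤ θ.2 s then δ * T ^ δ * θ.2 s ^ (-(δ + 1)) else 0)) ∧
    (∫⁻ θ in sieve S t T,
        (⨆ θhat ∈ sieve S t T, ENNReal.ofReal (empPriorDens S c δ θhat θ))
        ∂((simplexMeasure S).prod (Measure.pi fun _ : Fin S => (volume : Measure ℝ))) ≤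
      ENNReal.ofReal ((c + S) ^ (c + S + 1 / 2) * c ^ (-c) * (T / t) ^ (δ * S))) :=
  empirical_prior_density_global_bound_general S c δ t T hc hδ ht htT
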